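/- arXiv:1306.6674 — 2 statements merged into one kernel-verified Lean document; each statement's English description precedes it below -/
import Mathlib

section
/- For every Schwartz function φ : ℝⁿ → ℂ, the family indexed by z ∈ ℤⁿ ∖ {0} with terms c_z ∫_{ℝⁿ} e^{2πi (q⁻¹z)·x} φ(x) dx is absolutely summable, and the linear functional S_nᑫ on the Schwartz space defined by ⟨S_nᑫ, φ⟩ = ∑_{z ∈ ℤⁿ∖{0}} c_z ∫_{ℝⁿ} e^{2πi (q⁻¹z)·x} φ(x) dx is continuous with respect to the Schwartz space topology; that is, S_nᑫ is a tempered distribution on ℝⁿ. -/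
/-!
Each term equals `c_z · 𝓕φ(-q⁻¹z)`. Off `z = 0` the coefficients `c_z` are bounded, and since
`𝓕φ` is again a Schwartz function, `|𝓕φ(ξ)| ≤ 2²ⁿ p(𝓕φ) (1 + |ξ|)⁻²ⁿ` for one fixed Schwartz
seminorm `p`. As `∏ⱼ (1 + zⱼ²) ≲ (1 + |q⁻¹z|)²ⁿ` and `∑_{z ∈ ℤⁿ} ∏ⱼ (1 + zⱼ²)⁻¹ = (∑ₘ (1 + m²)⁻¹)ⁿ`
is finite, the series converges absolutely with sum bounded by a constant times `p(𝓕φ)`. So the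
functional is a summable combination of point evaluations, continuous on the Schwartz space,
composed with the Fourier transform.
-/
open MeasureTheory Real
open scoped BigOperators

noncomputable section

/-- The point `q z` of the lattice `q ℤⁿ`, where `q` is the diagonal matrix with
diagonal entries `qd 0, …, qd (n-1)`. -/
def latticePt (n : ℕ) (qd : Fin n → ℝ) (z : Fin n → ℤ) : EuclideanSpace ℝ (Fin n) :=
  WithLp.toLp 2 (fun j => qd j * (z j : ℝ))

/-- The term `c_z ∫ e^{2πi (q⁻¹ z)·x} φ(x) dx`, with
`c_z = -1/(4π² |q⁻¹z|² |Q|)`, `|q⁻¹z|² = ∑ (z j / q_{jj})²` and `|Q| = ∏ q_{jj}`. -/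
def fourierTerm (n : ℕ) (qd : Fin n → ℝ) (z : Fin n → ℤ)
    (φ : SchwartzMap (EuclideanSpace ℝ (Fin n)) ℂ) : ℂ :=
  ((-1 / (4 * π ^ 2 * (∑ j, ((z j : ℝ) / qd j) ^ 2) * ∏ j, qd j) : ℝ) : ℂ) *
    ∫ x : EuclideanSpace ℝ (Fin n),
      Complex.exp (2 * (π : ℂ) * Complex.I * ((∑ j, ((z j : ℝ) / qd j) * x j : ℝ) : ℂ)) * φ x

open scoped FourierTransform SchwartzMap

namespace SchwartzMap

variable {ι 𝕜 E F : Type*} [NormedField 𝕜]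
  [NormedAddCommGroup E] [NormedSpace ℝ E]
  [NormedAddCommGroup F] [NormedSpace ℝ F] [NormedSpace 𝕜 F] [SMulCommClass ℝ 𝕜 F]

theorem norm_smul_apply_le (c : 𝕜) (k : ℕ) (ψ : 𝓢(E, F)) (x : E) :
    ‖c • ψ x‖ ≤ 2 ^ k * (Finset.Iic (k, 0)).sup (schwartzSeminormFamily 𝕜 E F) ψ *
      (‖c‖ * ((1 + ‖x‖) ^ k)⁻¹) := by
  have decay := one_add_le_sup_seminorm_apply (𝕜 := 𝕜) (m := (k, 0)) le_rfl le_rfl ψ x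
  rw [norm_iteratedFDeriv_zero, mul_comm, ← le_div_iff₀ (by positivity)] at decay
  rw [norm_smul, mul_left_comm, ← div_eq_mul_inv]
  gcongr
  exact decay

variable {a : ι → 𝕜} {x : ι → E} {k : ℕ}

theorem summable_norm_smul_apply (ha : Summable fun i => ‖a i‖ * ((1 + ‖x i‖) ^ k)⁻¹)
    (ψ : 𝓢(E, F)) : Summable fun i => ‖a i • ψ (x i)‖ :=
  .of_nonneg_of_le (fun _ => norm_nonneg _) (fun i => norm_smul_apply_le (a i) k ψ (x i))
    (ha.mul_left _)

theorem norm_tsum_smul_apply_le (ha : Summable fun i => ‖a i‖ * ((1 + ‖x i‖) ^ k)⁻¹)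
    (ψ : 𝓢(E, F)) :
    ‖∑' i, a i • ψ (x i)‖ ≤ 2 ^ k * (∑' i, ‖a i‖ * ((1 + ‖x i‖) ^ k)⁻¹) *
      (Finset.Iic (k, 0)).sup (schwartzSeminormFamily 𝕜 E F) ψ := by
  calc ‖∑' i, a i • ψ (x i)‖ ≤ ∑' i, ‖a i • ψ (x i)‖ :=
        norm_tsum_le_tsum_norm (summable_norm_smul_apply ha ψ)
    _ ≤ ∑' i, 2 ^ k * (Finset.Iic (k, 0)).sup (schwartzSeminormFamily 𝕜 E F) ψ *
          (‖a i‖ * ((1 + ‖x i‖) ^ k)⁻¹) :=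
        (summable_norm_smul_apply ha ψ).tsum_le_tsum (fun i => norm_smul_apply_le (a i) k ψ (x i))
          (ha.mul_left _)
    _ = _ := by rw [tsum_mul_left]; ring

variable [CompleteSpace F]

def tsumSmulEvalCLM (ha : Summable fun i => ‖a i‖ * ((1 + ‖x i‖) ^ k)⁻¹) :
    𝓢(E, F) →L[𝕜] F :=
  mkCLMtoNormedSpace (σ := RingHom.id 𝕜) (fun ψ => ∑' i, a i • ψ (x i))
    (fun ψ φ => by
      simp only [add_apply, smul_add]
      exact (summable_norm_smul_apply ha ψ).of_norm.tsum_add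
        (summable_norm_smul_apply ha φ).of_norm)
    (fun c ψ => by
      simp only [smul_apply, RingHom.id_apply, smul_comm (a _) c]
      exact Summable.tsum_const_smul c (summable_norm_smul_apply ha ψ).of_norm)
    ⟨Finset.Iic (k, 0), 2 ^ k * ∑' i, ‖a i‖ * ((1 + ‖x i‖) ^ k)⁻¹,
      by positivity, norm_tsum_smul_apply_le ha⟩

theorem tsumSmulEvalCLM_apply (ha : Summable fun i => ‖a i‖ * ((1 + ‖x i‖) ^ k)⁻¹)
    (ψ : 𝓢(E, F)) : tsumSmulEvalCLM ha ψ = ∑' i, a i • ψ (x i) := rfl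

end SchwartzMap

theorem summable_fin_prod_of_nonneg {α : Type*} {f : α → ℝ} (hf₀ : 0 ≤ f) (hf : Summable f) :
    ∀ m : ℕ, Summable fun z : Fin m → α => ∏ j, f (z j)
  | 0 => .of_finite
  | m + 1 => by
    refine (Fin.consEquiv fun _ => α).summable_iff.mp ?_
    simpa [Function.comp_def, Fin.prod_univ_succ] using
      hf.mul_of_nonneg (summable_fin_prod_of_nonneg hf₀ hf m) hf₀
        fun _ => Finset.prod_nonneg fun j _ => hf₀ _

theorem summable_inv_one_add_sq_int : Summable fun m : ℤ => (1 + (m : ℝ) ^ 2)⁻¹ := by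
  refine .of_norm_bounded_eventually (Real.summable_one_div_int_pow.mpr one_lt_two) ?_
  filter_upwards [Set.Finite.compl_mem_cofinite (Set.finite_singleton (0 : ℤ))] with m hm
  have hm : (m : ℝ) ≠ 0 := by exact_mod_cast hm
  rw [Real.norm_of_nonneg (by positivity), one_div]
  gcongr
  linarith

theorem prod_one_add_sq_le {ι : Type*} [Fintype ι] (y : ι → ℝ) :
    ∏ j, (1 + y j ^ 2) ≤ (1 + ∑ j, y j ^ 2) ^ Fintype.card ι := by
  rw [← Finset.card_univ, ← Finset.prod_const]
  gcongr with j
  exact Finset.single_le_sum (fun i _ => sq_nonneg (y i)) (Finset.mem_univ j)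

theorem one_le_sum_sq_of_ne_zero {ι : Type*} [Fintype ι] {z : ι → ℤ} (hz : z ≠ 0) :
    1 ≤ ∑ j, (z j : ℝ) ^ 2 := by
  obtain ⟨j, hj⟩ := Function.ne_iff.mp hz
  calc (1 : ℝ) ≤ (z j : ℝ) ^ 2 := by
        have : (1 : ℤ) ≤ z j ^ 2 := by nlinarith [Int.one_le_abs hj, sq_abs (z j)]
        exact_mod_cast this
    _ ≤ ∑ j, (z j : ℝ) ^ 2 :=
        Finset.single_le_sum (fun i _ => sq_nonneg (z i : ℝ)) (Finset.mem_univ j)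

namespace PeriodicFundamentalSolution

variable {n : ℕ} {qd : Fin n → ℝ} {z : Fin n → ℤ} {M : ℝ}

def freq (qd : Fin n → ℝ) (z : Fin n → ℤ) : EuclideanSpace ℝ (Fin n) :=
  WithLp.toLp 2 fun j => (z j : ℝ) / qd j

def coeff (qd : Fin n → ℝ) (z : Fin n → ℤ) : ℝ :=
  -1 / (4 * π ^ 2 * (∑ j, ((z j : ℝ) / qd j) ^ 2) * ∏ j, qd j)

theorem norm_freq_sq : ‖freq qd z‖ ^ 2 = ∑ j, ((z j : ℝ) / qd j) ^ 2 := by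
  simp [freq, EuclideanSpace.norm_sq_eq, div_pow]

theorem sum_sq_le_mul_norm_freq_sq (hqd : ∀ j, qd j ≠ 0) (hM : ∀ j, |qd j| ≤ M) :
    ∑ j, (z j : ℝ) ^ 2 ≤ M ^ 2 * ‖freq qd z‖ ^ 2 := by
  rw [norm_freq_sq, Finset.mul_sum]
  gcongr with j
  calc (z j : ℝ) ^ 2 = qd j ^ 2 * ((z j : ℝ) / qd j) ^ 2 := by field_simp [hqd j]
    _ ≤ M ^ 2 * ((z j : ℝ) / qd j) ^ 2 :=
        mul_le_mul_of_nonneg_right (sq_le_sq' (abs_le.mp (hM j)).1 (abs_le.mp (hM j)).2)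
          (sq_nonneg _)

theorem abs_coeff_le (hqd : ∀ j, qd j ≠ 0) (hM : ∀ j, |qd j| ≤ M) (hz : z ≠ 0) :
    |coeff qd z| ≤ M ^ 2 / (4 * π ^ 2 * |∏ j, qd j|) := by
  have hP : 0 < |∏ j, qd j| := abs_pos.mpr (Finset.prod_ne_zero_iff.mpr fun j _ => hqd j)
  have h1 : 1 ≤ M ^ 2 * ‖freq qd z‖ ^ 2 :=
    (one_le_sum_sq_of_ne_zero hz).trans (sum_sq_le_mul_norm_freq_sq hqd hM)
  have hξ : 0 < ‖freq qd z‖ ^ 2 :=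
    (sq_nonneg _).lt_of_ne fun h => by rw [← h] at h1; norm_num at h1
  rw [coeff, ← norm_freq_sq, abs_div, abs_neg, abs_one, abs_mul, abs_of_pos (by positivity),
    div_le_div_iff₀ (by positivity) (by positivity)]
  have h4 : 0 < 4 * π ^ 2 * |∏ j, qd j| := by positivity
  nlinarith [mul_le_mul_of_nonneg_right h1 h4.le]

theorem prod_one_add_sq_le_freq (hqd : ∀ j, qd j ≠ 0) (hM : ∀ j, |qd j| ≤ M) :
    ∏ j, (1 + (z j : ℝ) ^ 2) ≤ (1 + M ^ 2) ^ n * (1 + ‖freq qd z‖) ^ (2 * n) := by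
  calc ∏ j, (1 + (z j : ℝ) ^ 2) ≤ (1 + ∑ j, (z j : ℝ) ^ 2) ^ n := by
        simpa using prod_one_add_sq_le fun j => (z j : ℝ)
    _ ≤ ((1 + M ^ 2) * (1 + ‖freq qd z‖) ^ 2) ^ n := by
        gcongr
        nlinarith [sum_sq_le_mul_norm_freq_sq (z := z) hqd hM, norm_nonneg (freq qd z),
          sq_nonneg M, mul_nonneg (sq_nonneg M) (norm_nonneg (freq qd z))]
    _ = _ := by rw [mul_pow, pow_mul]

theorem summable_coeff_mul_inv_one_add_norm_freq_pow (hqd : ∀ j, 0 < qd j) :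
    Summable fun z : {z : Fin n → ℤ // z ≠ 0} =>
      ‖(coeff qd z.1 : ℂ)‖ * ((1 + ‖-freq qd z.1‖) ^ (2 * n))⁻¹ := by
  set M := ∑ j, |qd j|
  have hqd' : ∀ j, qd j ≠ 0 := fun j => (hqd j).ne'
  have hM : ∀ j, |qd j| ≤ M := fun j =>
    Finset.single_le_sum (fun i _ => abs_nonneg (qd i)) (Finset.mem_univ j)
  have hprod := (summable_fin_prod_of_nonneg (fun m => by positivity)
    summable_inv_one_add_sq_int n).subtype fun z : Fin n → ℤ => z ≠ 0
  refine .of_nonneg_of_le (fun z => by positivity) (fun z => ?_)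
    (hprod.mul_left (M ^ 2 / (4 * π ^ 2 * |∏ j, qd j|) * (1 + M ^ 2) ^ n))
  simp only [Function.comp_apply, norm_neg, Complex.norm_real, Real.norm_eq_abs]
  have hprod_pos : 0 < ∏ j, (1 + (z.1 j : ℝ) ^ 2) := Finset.prod_pos fun j _ => by positivity
  calc |coeff qd z.1| * ((1 + ‖freq qd z.1‖) ^ (2 * n))⁻¹
      ≤ M ^ 2 / (4 * π ^ 2 * |∏ j, qd j|) *
          ((1 + M ^ 2) ^ n * (∏ j, (1 + (z.1 j : ℝ) ^ 2))⁻¹) := by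
        gcongr
        · exact abs_coeff_le hqd' hM z.2
        · rw [← div_eq_mul_inv, inv_le_comm₀ (by positivity) (by positivity), inv_div,
            div_le_iff₀' (by positivity)]
          exact prod_one_add_sq_le_freq hqd' hM
    _ = _ := by rw [Finset.prod_inv_distrib]; ring

/-- Mathlib's Fourier kernel is `e^{-2πi⟨x, w⟩}`, hence the evaluation at `-q⁻¹z`. -/
theorem fourierTerm_eq (qd : Fin n → ℝ) (z : Fin n → ℤ)
    (φ : SchwartzMap (EuclideanSpace ℝ (Fin n)) ℂ) :
    fourierTerm n qd z φ = (coeff qd z : ℂ) * 𝓕 φ (-freq qd z) := by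
  rw [fourierTerm, coeff, SchwartzMap.fourier_coe, Real.fourier_eq']
  congr 1
  refine integral_congr_ae (.of_forall fun x => ?_)
  simp only [smul_eq_mul, inner_neg_right, freq, PiLp.inner_apply, RCLike.inner_apply,
    conj_trivial]
  push_cast
  ring_nf

end PeriodicFundamentalSolution

theorem periodic_fundamental_solution_is_tempered_distribution_general
    (n : ℕ) (qd : Fin n → ℝ) (hqd : ∀ j, 0 < qd j) :
    (∀ φ : SchwartzMap (EuclideanSpace ℝ (Fin n)) ℂ,
        Summable fun z : {z : Fin n → ℤ // z ≠ 0} => ‖fourierTerm n qd z.1 φ‖) ∧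
    ∃ T : SchwartzMap (EuclideanSpace ℝ (Fin n)) ℂ →L[ℂ] ℂ,
      ∀ φ : SchwartzMap (EuclideanSpace ℝ (Fin n)) ℂ,
        T φ = ∑' z : {z : Fin n → ℤ // z ≠ 0}, fourierTerm n qd z.1 φ := by
  open PeriodicFundamentalSolution in
  have hw := summable_coeff_mul_inv_one_add_norm_freq_pow hqd
  refine ⟨fun φ => ?_, (SchwartzMap.tsumSmulEvalCLM hw).comp (SchwartzMap.fourierTransformCLM ℂ),
    fun φ => ?_⟩
  · simpa only [fourierTerm_eq, smul_eq_mul] using SchwartzMap.summable_norm_smul_apply hw (𝓕 φ)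
  · simp only [ContinuousLinearMap.comp_apply, SchwartzMap.tsumSmulEvalCLM_apply,
      SchwartzMap.fourierTransformCLM_apply, fourierTerm_eq, smul_eq_mul]

/-- The family defining `S_n^q` is absolutely summable against every Schwartz function,
and the resulting linear functional is continuous on the Schwartz space; i.e. `S_n^q`
is a tempered distribution. -/
theorem periodic_fundamental_solution_is_tempered_distribution
    (n : ℕ) (hn : 2 ≤ n) (qd : Fin n → ℝ) (hqd : ∀ j, 0 < qd j) :
    (∀ φ : SchwartzMap (EuclideanSpace ℝ (Fin n)) ℂ,
        Summable fun z : {z : Fin n → ℤ // z ≠ 0} => ‖fourierTerm n qd z.1 φ‖) ∧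
    ∃ T : SchwartzMap (EuclideanSpace ℝ (Fin n)) ℂ →L[ℂ] ℂ,
      ∀ φ : SchwartzMap (EuclideanSpace ℝ (Fin n)) ℂ,
        T φ = ∑' z : {z : Fin n → ℤ // z ≠ 0}, fourierTerm n qd z.1 φ :=
  periodic_fundamental_solution_is_tempered_distribution_general n qd hqd
end
end

section
/- Let 𝕀 be a bounded open subset of ℝⁿ such that cl 𝕀 ⊆ Q and such that ℝⁿ ∖ cl 𝕀 is connected. Then the periodically perforated domain 𝕊[𝕀]⁻ = ℝⁿ ∖ ⋃_{z ∈ ℤⁿ} cl(qz + 𝕀) is an open connected subset of ℝⁿ. -/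
open MeasureTheory Real
open scoped BigOperators

noncomputable section

/-- The fundamental periodicity cell `Q = ∏_j (0, q_{jj})`. -/
def cellQ (n : ℕ) (qd : Fin n → ℝ) : Set (EuclideanSpace ℝ (Fin n)) :=
  {x | ∀ j, x j ∈ Set.Ioo 0 (qd j)}

/-- The periodically perforated domain `𝕊[𝕀]⁻ = ℝⁿ ∖ ⋃_{z ∈ ℤⁿ} cl(qz + 𝕀)`. -/
def perfDom (n : ℕ) (qd : Fin n → ℝ) (I : Set (EuclideanSpace ℝ (Fin n))) :
    Set (EuclideanSpace ℝ (Fin n)) :=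
  (⋃ z : Fin n → ℤ, closure ((latticePt n qd z + ·) '' I))ᶜ

/-!
The domain is the union over `z ∈ ℤⁿ` of the translates `q z + (cl Q ∖ cl 𝕀)`. Each of them is
connected, being the image of the connected set `ℝⁿ ∖ cl 𝕀` under the coordinatewise clamping
onto `cl Q`, which fixes `cl Q` and sends everything outside `cl Q` to `∂Q`, hence outside `cl 𝕀`.
Two translates whose indices differ by a unit vector share a vertex of the box, and such steps
connect any two points of `ℤⁿ`. Openness holds because the holes `q z + cl 𝕀` form a locally
finite family of closed sets.
-/

open Set Function

def boxQ (n : ℕ) (qd : Fin n → ℝ) : Set (EuclideanSpace ℝ (Fin n)) :=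
  {x | ∀ j, x j ∈ Icc 0 (qd j)}

def clampQ (n : ℕ) (qd : Fin n → ℝ) (x : EuclideanSpace ℝ (Fin n)) : EuclideanSpace ℝ (Fin n) :=
  WithLp.toLp 2 fun j => max 0 (min (x j) (qd j))

def cellIndex (n : ℕ) (qd : Fin n → ℝ) (x : EuclideanSpace ℝ (Fin n)) : Fin n → ℤ :=
  fun j => ⌊x j / qd j⌋

def perfPiece (n : ℕ) (qd : Fin n → ℝ) (I : Set (EuclideanSpace ℝ (Fin n))) (z : Fin n → ℤ) :
    Set (EuclideanSpace ℝ (Fin n)) :=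
  (latticePt n qd z + ·) '' (boxQ n qd \ closure I)

theorem Relation.reflTransGen_of_update_succ {ι : Type*} [Fintype ι] [DecidableEq ι]
    {r : (ι → ℤ) → (ι → ℤ) → Prop} (hr : ∀ a b, r a b → r b a)
    (hstep : ∀ z j, r z (update z j (z j + 1))) (z w : ι → ℤ) :
    Relation.ReflTransGen r z w := by
  have hline : ∀ (z : ι → ℤ) j (k : ℤ), Relation.ReflTransGen r z (update z j (z j + k)) := by
    intro z j k
    induction k using Int.induction_on with
    | zero => simpa using Relation.ReflTransGen.refl
    | succ k ih =>
      refine ih.tail ?_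
      simpa [add_assoc] using hstep (update z j (z j + k)) j
    | pred k ih =>
      refine ih.tail (hr _ _ ?_)
      have h := hstep (update z j (z j + (-k - 1))) j
      rwa [update_self, update_idem, show z j + (-k - 1) + 1 = z j + -k by ring] at h
  suffices h : ∀ s : Finset ι, Relation.ReflTransGen r z (s.piecewise w z) by
    simpa using h Finset.univ
  intro s
  induction s using Finset.induction_on with
  | empty => simpa using Relation.ReflTransGen.refl
  | insert j s _ ih =>
    rw [Finset.piecewise_insert]
    simpa using ih.trans (hline (s.piecewise w z) j (w j - s.piecewise w z j))

section

variable {n : ℕ} {qd : Fin n → ℝ}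

@[simp]
lemma latticePt_apply (z : Fin n → ℤ) (j : Fin n) : latticePt n qd z j = qd j * z j := rfl

lemma latticePt_update_succ (z : Fin n → ℤ) (j : Fin n) :
    latticePt n qd (update z j (z j + 1)) = latticePt n qd z + EuclideanSpace.single j (qd j) := by
  ext k
  by_cases hk : k = j
  · subst hk
    simp only [latticePt_apply, update_self, Int.cast_add, Int.cast_one, PiLp.add_apply,
      PiLp.single_eq_same]
    ring
  · simp [hk]

lemma closure_image_latticePt_add (z : Fin n → ℤ) (s : Set (EuclideanSpace ℝ (Fin n))) :
    closure ((latticePt n qd z + ·) '' s) = (latticePt n qd z + ·) '' closure s :=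
  ((Homeomorph.addLeft (latticePt n qd z)).image_closure s).symm

lemma continuous_clampQ : Continuous (clampQ n qd) :=
  (PiLp.continuous_toLp 2 _).comp <| continuous_pi fun j =>
    continuous_const.max (((continuous_apply j).comp (PiLp.continuous_ofLp 2 _)).min
      continuous_const)

lemma clampQ_mem_boxQ (hqd : ∀ j, 0 ≤ qd j) (x : EuclideanSpace ℝ (Fin n)) :
    clampQ n qd x ∈ boxQ n qd :=
  fun j => ⟨le_max_left _ _, max_le (hqd j) (min_le_right _ _)⟩

lemma clampQ_eq_self {x : EuclideanSpace ℝ (Fin n)} (hx : x ∈ boxQ n qd) : clampQ n qd x = x := by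
  ext j
  simp [clampQ, (hx j).1, (hx j).2]

lemma clampQ_notMem_cellQ {x : EuclideanSpace ℝ (Fin n)} (hx : x ∉ boxQ n qd) :
    clampQ n qd x ∉ cellQ n qd := by
  simp only [boxQ, mem_ofPred_eq, not_forall] at hx
  obtain ⟨j, hj⟩ := hx
  intro hc
  have hcj := hc j
  simp only [clampQ, PiLp.toLp_apply, mem_Ioo, mem_Icc] at hcj hj
  rcases not_and_or.mp hj with hj | hj
  · have : max 0 (min (x j) (qd j)) = 0 := max_eq_left ((min_le_left _ _).trans (not_le.mp hj).le)
    linarith [hcj.1]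
  · have : min (x j) (qd j) = qd j := min_eq_right (not_le.mp hj).le
    rw [this] at hcj
    linarith [le_max_right 0 (qd j), hcj.2]

lemma boxQ_diff_eq_image_clampQ (hqd : ∀ j, 0 ≤ qd j) {K : Set (EuclideanSpace ℝ (Fin n))}
    (hK : K ⊆ cellQ n qd) : boxQ n qd \ K = clampQ n qd '' Kᶜ := by
  ext x
  constructor
  · rintro ⟨hx, hxK⟩
    exact ⟨x, hxK, clampQ_eq_self hx⟩
  · rintro ⟨y, hy, rfl⟩
    refine ⟨clampQ_mem_boxQ hqd y, fun hK' => ?_⟩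
    by_cases hyb : y ∈ boxQ n qd
    · exact hy (clampQ_eq_self hyb ▸ hK')
    · exact clampQ_notMem_cellQ hyb (hK hK')

lemma cellIndex_latticePt_add (hqd : ∀ j, 0 < qd j) {c : EuclideanSpace ℝ (Fin n)}
    (hc : ∀ j, c j ∈ Ico 0 (qd j)) (z : Fin n → ℤ) :
    cellIndex n qd (latticePt n qd z + c) = z := by
  funext j
  have hq := hqd j
  rw [cellIndex, Int.floor_eq_iff, PiLp.add_apply, latticePt_apply, mul_comm,
    add_div, mul_div_cancel_right₀ _ hq.ne', le_add_iff_nonneg_right, add_lt_add_iff_left,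
    div_lt_one hq]
  exact ⟨div_nonneg (hc j).1 hq.le, (hc j).2⟩

lemma sub_latticePt_cellIndex_mem_Ico (hqd : ∀ j, 0 < qd j) (x : EuclideanSpace ℝ (Fin n))
    (j : Fin n) : (x - latticePt n qd (cellIndex n qd x)) j ∈ Ico 0 (qd j) := by
  have hq := hqd j
  have h1 := (le_div_iff₀ hq).mp (Int.floor_le (x j / qd j))
  have h2 := (div_lt_iff₀ hq).mp (Int.lt_floor_add_one (x j / qd j))
  simp only [PiLp.sub_apply, latticePt_apply, cellIndex]
  constructor <;> nlinarith

lemma eq_of_latticePt_add_eq (hqd : ∀ j, 0 < qd j) {b c : EuclideanSpace ℝ (Fin n)}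
    (hb : b ∈ boxQ n qd) (hc : c ∈ cellQ n qd) {z w : Fin n → ℤ}
    (h : latticePt n qd z + b = latticePt n qd w + c) : z = w := by
  funext j
  have hj : qd j * ((z j - w j : ℤ) : ℝ) = c j - b j := by
    have := congrArg (· j) h
    simp only [PiLp.add_apply, latticePt_apply] at this
    push_cast
    linarith
  have hq := hqd j
  have hlt : ((z j - w j : ℤ) : ℝ) < 1 := by
    nlinarith [(hb j).1, (hc j).2]
  have hgt : (-1 : ℝ) < ((z j - w j : ℤ) : ℝ) := by
    nlinarith [(hb j).2, (hc j).1]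
  have : z j - w j < 1 := by exact_mod_cast hlt
  have : -1 < z j - w j := by exact_mod_cast hgt
  omega

lemma finite_image_cellIndex_ball (hqd : ∀ j, 0 ≤ qd j) (x : EuclideanSpace ℝ (Fin n))
    (r : ℝ) : (cellIndex n qd '' Metric.ball x r).Finite := by
  refine (Set.Finite.pi fun j => finite_Icc ⌊(x j - r) / qd j⌋ ⌊(x j + r) / qd j⌋).subset ?_
  rintro _ ⟨y, hy, rfl⟩ j -
  have hyj : |y j - x j| < r := (PiLp.dist_apply_le y x j).trans_lt hy
  rw [abs_lt] at hyj
  exact ⟨Int.floor_mono (div_le_div_of_nonneg_right (by linarith) (hqd j)),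
    Int.floor_mono (div_le_div_of_nonneg_right (by linarith) (hqd j))⟩

variable {I : Set (EuclideanSpace ℝ (Fin n))}

lemma locallyFinite_closure_latticePt_add (hqd : ∀ j, 0 < qd j) (hIQ : closure I ⊆ cellQ n qd) :
    LocallyFinite fun z => closure ((latticePt n qd z + ·) '' I) := by
  intro x
  refine ⟨Metric.ball x 1, Metric.ball_mem_nhds x one_pos,
    (finite_image_cellIndex_ball (fun j => (hqd j).le) x 1).subset ?_⟩
  rintro z ⟨_, hy, hyx⟩
  simp only [closure_image_latticePt_add] at hy
  obtain ⟨c, hc, rfl⟩ := hy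
  exact ⟨_, hyx, cellIndex_latticePt_add hqd (fun j => Ioo_subset_Ico_self (hIQ hc j)) z⟩

lemma isOpen_perfDom (hqd : ∀ j, 0 < qd j) (hIQ : closure I ⊆ cellQ n qd) :
    IsOpen (perfDom n qd I) :=
  isOpen_compl_iff.mpr <|
    (locallyFinite_closure_latticePt_add hqd hIQ).isClosed_iUnion fun _ => isClosed_closure

lemma perfDom_eq_iUnion_perfPiece (hqd : ∀ j, 0 < qd j) (hIQ : closure I ⊆ cellQ n qd) :
    perfDom n qd I = ⋃ z, perfPiece n qd I z := by
  ext x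
  simp only [perfDom, perfPiece, closure_image_latticePt_add, mem_compl_iff, mem_iUnion,
    not_exists, mem_image]
  constructor
  · intro hx
    exact ⟨cellIndex n qd x, x - latticePt n qd (cellIndex n qd x),
      ⟨fun j => Ico_subset_Icc_self (sub_latticePt_cellIndex_mem_Ico hqd x j),
        fun hI => hx _ _ ⟨hI, add_sub_cancel _ _⟩⟩, add_sub_cancel _ _⟩
  · rintro ⟨z, b, ⟨hb, hbI⟩, rfl⟩ w c ⟨hc, hcb⟩
    obtain rfl := eq_of_latticePt_add_eq hqd hb (hIQ hc) hcb.symm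
    exact hbI (add_left_cancel hcb ▸ hc)

lemma isConnected_perfPiece (hqd : ∀ j, 0 < qd j) (hIQ : closure I ⊆ cellQ n qd)
    (hIc : IsConnected (closure I)ᶜ) (z : Fin n → ℤ) : IsConnected (perfPiece n qd I z) := by
  have hbox : IsConnected (boxQ n qd \ closure I) := by
    rw [boxQ_diff_eq_image_clampQ (fun j => (hqd j).le) hIQ]
    exact hIc.image _ continuous_clampQ.continuousOn
  exact hbox.image _ (continuous_const_add _).continuousOn

lemma latticePt_add_mem_perfPiece (hIQ : closure I ⊆ cellQ n qd) (z : Fin n → ℤ)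
    {b : EuclideanSpace ℝ (Fin n)} (hb : b ∈ boxQ n qd) (hb' : b ∉ cellQ n qd) :
    latticePt n qd z + b ∈ perfPiece n qd I z :=
  ⟨b, ⟨hb, fun hI => hb' (hIQ hI)⟩, rfl⟩

lemma perfPiece_inter_perfPiece_update_succ_nonempty (hqd : ∀ j, 0 < qd j)
    (hIQ : closure I ⊆ cellQ n qd) (z : Fin n → ℤ) (j : Fin n) :
    (perfPiece n qd I z ∩ perfPiece n qd I (update z j (z j + 1))).Nonempty := by
  refine ⟨latticePt n qd (update z j (z j + 1)), ?_, ?_⟩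
  · rw [latticePt_update_succ]
    refine latticePt_add_mem_perfPiece hIQ z (fun k => ?_) fun h => (h j).2.ne ?_
    · by_cases hk : k = j <;> simp [hk, (hqd j).le, (hqd k).le]
    · simp
  · simpa using latticePt_add_mem_perfPiece (I := I) hIQ (update z j (z j + 1))
      (b := 0) (fun k => by simp [(hqd k).le]) fun h => (h j).1.ne rfl

end

theorem perforated_domain_open_connected_general
    (n : ℕ) (qd : Fin n → ℝ) (hqd : ∀ j, 0 < qd j)
    (I : Set (EuclideanSpace ℝ (Fin n)))
    (hIQ : closure I ⊆ cellQ n qd)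
    (hIc : IsConnected (closure I)ᶜ) :
    IsOpen (perfDom n qd I) ∧ IsConnected (perfDom n qd I) := by
  refine ⟨isOpen_perfDom hqd hIQ, ?_⟩
  rw [perfDom_eq_iUnion_perfPiece hqd hIQ]
  refine IsConnected.iUnion_of_reflTransGen (isConnected_perfPiece hqd hIQ hIc) fun z w => ?_
  exact Relation.reflTransGen_of_update_succ (fun _ _ h => by rwa [inter_comm])
    (perfPiece_inter_perfPiece_update_succ_nonempty hqd hIQ) z w

/-- If `𝕀` is bounded open with `cl 𝕀 ⊆ Q` and connected exterior `ℝⁿ ∖ cl 𝕀`, then the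
periodically perforated domain `𝕊[𝕀]⁻` is an open connected subset of `ℝⁿ`. -/
theorem perforated_domain_open_connected
    (n : ℕ) (hn : 2 ≤ n) (qd : Fin n → ℝ) (hqd : ∀ j, 0 < qd j)
    (I : Set (EuclideanSpace ℝ (Fin n)))
    (hIo : IsOpen I) (hIb : Bornology.IsBounded I)
    (hIQ : closure I ⊆ cellQ n qd)
    (hIc : IsConnected (closure I)ᶜ) :
    IsOpen (perfDom n qd I) ∧ IsConnected (perfDom n qd I) :=
  perforated_domain_open_connected_general n qd hqd I hIQ hIc

end
end
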